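/- For every M > 0 there exists a constant C > 0, depending only on K, M, n, α, β and m, such that for all t > 0 and all y ∈ ℝⁿ with |y| ≤ Mt, one has m(2t, 0, 2y) ≤ 2 m(t, 0, y) + C. -/

import Mathlib

open MeasureTheory Filter

noncomputable section

/-- A pair `(η, η')` is admissible on `[a, b]`: the candidate derivative `η'` is interval
integrable and `η` is its indefinite integral, i.e. `η` is absolutely continuous on `[a, b]`
with a.e. derivative `η'`. -/
def AdmissibleOn (n : ℕ) (a b : ℝ) (η η' : ℝ → EuclideanSpace ℝ (Fin n)) : Prop :=
  IntervalIntegrable η' volume a b ∧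
    ∀ s ∈ Set.Icc a b, η s = η a + ∫ u in a..s, η' u

/-- The structural hypotheses on the Lagrangian `L`: continuity, `ℤ^(n+1)`-periodicity in the
first two (space-time) arguments, convexity in the velocity argument, and two-sided growth
bounds of order `m`. -/
structure IsLagrangian (n : ℕ) (α β K m : ℝ)
    (L : EuclideanSpace ℝ (Fin n) → ℝ → EuclideanSpace ℝ (Fin n) → ℝ) : Prop where
  cont : Continuous fun q : (EuclideanSpace ℝ (Fin n)) × ℝ × (EuclideanSpace ℝ (Fin n)) =>
    L q.1 q.2.1 q.2.2
  periodic : ∀ (x v : EuclideanSpace ℝ (Fin n)) (t : ℝ) (w : Fin n → ℤ) (j : ℤ),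
    L (WithLp.toLp 2 (fun i => x i + (w i : ℝ))) (t + j) v = L x t v
  convexV : ∀ x t, ConvexOn ℝ Set.univ (fun v => L x t v)
  lower_bound : ∀ x t v, α * ‖v‖ ^ m - K ≤ L x t v
  upper_bound : ∀ x t v, L x t v ≤ β * ‖v‖ ^ m + K

/-- The minimal cost `m(t, x, y)` to travel from `x` to `y` in time `t`, i.e. the infimum of
`∫_0^t L(η(s), s, η'(s)) ds` over absolutely continuous curves `η : [0, t] → ℝⁿ` with
`η 0 = x` and `η t = y` (and a well-defined, i.e. integrable, Lagrangian cost). -/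
def mCost (n : ℕ) (L : EuclideanSpace ℝ (Fin n) → ℝ → EuclideanSpace ℝ (Fin n) → ℝ)
    (t : ℝ) (x y : EuclideanSpace ℝ (Fin n)) : ℝ :=
  sInf {c : ℝ | ∃ η η' : ℝ → EuclideanSpace ℝ (Fin n),
    AdmissibleOn n 0 t η η' ∧ η 0 = x ∧ η t = y ∧
    IntervalIntegrable (fun s => L (η s) s (η' s)) volume 0 t ∧
    c = ∫ s in (0:ℝ)..t, L (η s) s (η' s)}

/-!
Follow a near-optimal curve `η` from `0` to `y` on `[0, t]`, then a copy of `η` translated in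
space by a lattice vector `z` close to `y`. Periodicity in time only allows integer time shifts,
so the copy is cut at a window `[τ, τ + 4]` on which `η` is cheap (it exists by averaging over
`⌊t / 4⌋` disjoint windows) and its two halves are shifted by `⌊t⌋ + 2` and `⌊t⌋ - 1`. The
coercivity of `L` bounds the displacement of `η` across the cheap window, so the three gaps are
bridged by straight segments of duration between `1` and `2` at uniformly bounded cost, and the
cheap window that is skipped costs at least `-4K`. For `t ≤ 4` a straight segment suffices.
-/

open Set intervalIntegral

theorem IntervalIntegrable.mono_of_le {E : Type*} [NormedAddCommGroup E] {f : ℝ → E}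
    {a b r s : ℝ} (hf : IntervalIntegrable f volume a b) (har : a ≤ r) (hrs : r ≤ s)
    (hsb : s ≤ b) : IntervalIntegrable f volume r s :=
  hf.mono_set (uIcc_subset_uIcc (mem_uIcc_of_le har (hrs.trans hsb))
    (mem_uIcc_of_le (har.trans hrs) hsb))

theorem exists_integral_window_le {g : ℝ → ℝ} {ℓ t : ℝ} (hℓ : 0 < ℓ) (hℓt : ℓ ≤ t)
    (hg : ∀ s ∈ Icc 0 t, 0 ≤ g s) (hint : IntervalIntegrable g volume 0 t) :
    ∃ τ, 0 ≤ τ ∧ τ + ℓ ≤ t ∧ ∫ s in τ..τ + ℓ, g s ≤ 2 * ℓ / t * ∫ s in 0..t, g s := by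
  have ht : 0 < t := hℓ.trans_le hℓt
  set N := ⌊t / ℓ⌋₊
  have hN : (1 : ℝ) ≤ N := by
    exact_mod_cast Nat.le_floor (by rw [Nat.cast_one, le_div_iff₀ hℓ]; linarith)
  have hNpos : (0 : ℝ) < N := zero_lt_one.trans_le hN
  have hNt : N * ℓ ≤ t := (le_div_iff₀ hℓ).1 (Nat.floor_le (div_pos ht hℓ).le)
  have htN : t < (N + 1) * ℓ := (div_lt_iff₀ hℓ).1 (Nat.lt_floor_add_one _)
  have hwin : ∀ k < N, IntervalIntegrable g volume (k * ℓ) ((k + 1 : ℕ) * ℓ) := fun k hk => by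
    have : (k + 1 : ℕ) ≤ (N : ℝ) := by exact_mod_cast hk
    exact hint.mono_of_le (by positivity) (by push_cast; nlinarith) (by nlinarith)
  have hsum : ∑ k ∈ Finset.range N, ∫ s in k * ℓ..(k + 1 : ℕ) * ℓ, g s
      ≤ ∑ _k ∈ Finset.range N, (∫ s in 0..t, g s) / N := by
    rw [sum_integral_adjacent_intervals hwin, Finset.sum_const, Finset.card_range, nsmul_eq_mul,
      mul_div_cancel₀ _ hNpos.ne', Nat.cast_zero, zero_mul,
      ← integral_add_adjacent_intervals (hint.mono_of_le le_rfl (by positivity) hNt)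
        (hint.mono_of_le (by positivity) hNt le_rfl)]
    have := integral_nonneg (μ := volume) hNt fun s hs =>
      hg s ⟨(by positivity : (0 : ℝ) ≤ N * ℓ).trans hs.1, hs.2⟩
    linarith
  obtain ⟨k, hk, hkle⟩ :=
    Finset.exists_le_of_sum_le (Finset.nonempty_range_iff.2 (Nat.cast_pos.1 hNpos).ne') hsum
  have hk' : (k + 1 : ℝ) ≤ N := by exact_mod_cast Finset.mem_range.1 hk
  refine ⟨k * ℓ, by positivity, by nlinarith, ?_⟩
  have hint0 : 0 ≤ ∫ s in 0..t, g s := integral_nonneg (by linarith) hg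
  calc ∫ s in k * ℓ..k * ℓ + ℓ, g s = ∫ s in k * ℓ..(k + 1 : ℕ) * ℓ, g s := by
        push_cast; ring_nf
    _ ≤ (∫ s in 0..t, g s) / N := hkle
    _ ≤ 2 * ℓ / t * ∫ s in 0..t, g s := by
      rw [div_eq_inv_mul]
      gcongr
      rw [inv_le_comm₀ hNpos (by positivity), inv_div, div_le_iff₀ (by positivity)]
      nlinarith

theorem EuclideanSpace.exists_norm_sub_intCast_le {ι : Type*} [Fintype ι]
    (y : EuclideanSpace ℝ ι) :
    ∃ w : ι → ℤ, ‖y - WithLp.toLp 2 (fun i => (w i : ℝ))‖ ≤ √(Fintype.card ι) := by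
  refine ⟨fun i => round (y i), ?_⟩
  rw [EuclideanSpace.norm_eq]
  gcongr
  calc ∑ i, ‖(y - WithLp.toLp 2 (fun i => (round (y i) : ℝ))) i‖ ^ 2 ≤ ∑ _i : ι, (1 : ℝ) := by
        gcongr with i
        rw [PiLp.sub_apply, PiLp.toLp_apply, Real.norm_eq_abs, sq_abs]
        nlinarith [abs_sub_round (y i), abs_nonneg (y i - round (y i)), sq_abs (y i - round (y i))]
    _ = Fintype.card ι := by simp

section

variable {n : ℕ}

local notation "ℝⁿ" => EuclideanSpace ℝ (Fin n)

variable {α β K m : ℝ} {L : EuclideanSpace ℝ (Fin n) → ℝ → EuclideanSpace ℝ (Fin n) → ℝ}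
  {a b d c c₁ c₂ t D V : ℝ} {x y z : EuclideanSpace ℝ (Fin n)}
  {η η' ζ ζ' : ℝ → EuclideanSpace ℝ (Fin n)}

theorem AdmissibleOn.mono {a' b' : ℝ} (h : AdmissibleOn n a b η η') (ha : a ≤ a') (hab : a' ≤ b')
    (hb : b' ≤ b) : AdmissibleOn n a' b' η η' := by
  refine ⟨h.1.mono_of_le ha hab hb, fun s hs => ?_⟩
  rw [h.2 s ⟨ha.trans hs.1, hs.2.trans hb⟩, h.2 a' ⟨ha, hab.trans hb⟩, add_assoc,
    integral_add_adjacent_intervals (h.1.mono_of_le le_rfl ha (hab.trans hb))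
      (h.1.mono_of_le ha hs.1 (hs.2.trans hb))]

theorem AdmissibleOn.trans (h₁ : AdmissibleOn n a b η η') (h₂ : AdmissibleOn n b d η η')
    (hab : a ≤ b) : AdmissibleOn n a d η η' := by
  refine ⟨h₁.1.trans h₂.1, fun s hs => ?_⟩
  rcases le_total s b with hsb | hbs
  · exact h₁.2 s ⟨hs.1, hsb⟩
  · rw [h₂.2 s ⟨hbs, hs.2⟩, h₁.2 b ⟨hab, le_rfl⟩, add_assoc,
      integral_add_adjacent_intervals h₁.1 (h₂.1.mono_of_le le_rfl hbs hs.2)]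

theorem AdmissibleOn.congr (h : AdmissibleOn n a b η η') (hab : a ≤ b) (hζ : EqOn ζ η (Icc a b))
    (hζ' : EqOn ζ' η' (Ioo a b)) : AdmissibleOn n a b ζ ζ' := by
  refine ⟨h.1.congr_uIoo (by rwa [uIoo_of_le hab, eqOn_comm]), fun s hs => ?_⟩
  have hsub : uIoo a s ⊆ Ioo a b := by
    rw [uIoo_of_le hs.1]
    exact Ioo_subset_Ioo_right hs.2
  rw [hζ hs, hζ ⟨le_rfl, hab⟩, h.2 s hs, integral_congr_uIoo ((hζ'.mono hsub).symm)]

theorem AdmissibleOn.translate (h : AdmissibleOn n a b η η') (τ : ℝ) (z : ℝⁿ) :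
    AdmissibleOn n (a + τ) (b + τ) (fun s => η (s - τ) + z) (fun s => η' (s - τ)) := by
  refine ⟨h.1.comp_sub_right τ, fun s hs => ?_⟩
  dsimp only
  rw [h.2 (s - τ) ⟨by linarith [hs.1], by linarith [hs.2]⟩, integral_comp_sub_right,
    add_sub_cancel_right]
  abel

theorem AdmissibleOn.norm_sub_le (h : AdmissibleOn n a b η η') (hab : a ≤ b) :
    ‖η b - η a‖ ≤ ∫ s in a..b, ‖η' s‖ := by
  rw [h.2 b ⟨hab, le_rfl⟩, add_sub_cancel_left]
  exact norm_integral_le_integral_norm hab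

/-- `mCost n L t x y` is, by definition, the infimum of the `c` with `IsPathCost L 0 t x y c`. -/
def IsPathCost (L : ℝⁿ → ℝ → ℝⁿ → ℝ) (a b : ℝ) (x y : ℝⁿ) (c : ℝ) : Prop :=
  ∃ η η' : ℝ → ℝⁿ, AdmissibleOn n a b η η' ∧ η a = x ∧ η b = y ∧
    IntervalIntegrable (fun s => L (η s) s (η' s)) volume a b ∧
    c = ∫ s in a..b, L (η s) s (η' s)

theorem IsPathCost.trans (h₁ : IsPathCost L a b x y c₁) (h₂ : IsPathCost L b d y z c₂)
    (hab : a ≤ b) (hbd : b ≤ d) : IsPathCost L a d x z (c₁ + c₂) := by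
  obtain ⟨η₁, η₁', hadm₁, rfl, rfl, hint₁, rfl⟩ := h₁
  obtain ⟨η₂, η₂', hadm₂, hjoin, rfl, hint₂, rfl⟩ := h₂
  let ζ : ℝ → ℝⁿ := fun s => if s ≤ b then η₁ s else η₂ s
  let ζ' : ℝ → ℝⁿ := fun s => if s ≤ b then η₁' s else η₂' s
  have hζ₁ : EqOn ζ η₁ (Icc a b) := fun s hs => if_pos hs.2
  have hζ₁' : EqOn ζ' η₁' (Ioo a b) := fun s hs => if_pos hs.2.le
  have hζ₂ : EqOn ζ η₂ (Icc b d) := by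
    intro s hs
    rcases hs.1.eq_or_lt with rfl | hbs
    · exact (if_pos le_rfl).trans hjoin.symm
    · exact if_neg (not_le.2 hbs)
  have hζ₂' : EqOn ζ' η₂' (Ioo b d) := fun s hs => if_neg (not_le.2 hs.1)
  have hcost₁ : EqOn (fun s => L (η₁ s) s (η₁' s)) (fun s => L (ζ s) s (ζ' s)) (uIoo a b) := by
    rw [uIoo_of_le hab]
    exact fun s hs => by simp only [hζ₁ (Ioo_subset_Icc_self hs), hζ₁' hs]
  have hcost₂ : EqOn (fun s => L (η₂ s) s (η₂' s)) (fun s => L (ζ s) s (ζ' s)) (uIoo b d) := by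
    rw [uIoo_of_le hbd]
    exact fun s hs => by simp only [hζ₂ (Ioo_subset_Icc_self hs), hζ₂' hs]
  have hint₁' := hint₁.congr_uIoo hcost₁
  have hint₂' := hint₂.congr_uIoo hcost₂
  refine ⟨ζ, ζ', (hadm₁.congr hab hζ₁ hζ₁').trans (hadm₂.congr hbd hζ₂ hζ₂') hab,
    hζ₁ ⟨le_rfl, hab⟩, hζ₂ ⟨hbd, le_rfl⟩, hint₁'.trans hint₂', ?_⟩
  rw [← integral_add_adjacent_intervals hint₁' hint₂', integral_congr_uIoo hcost₁,
    integral_congr_uIoo hcost₂]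

theorem IsPathCost.translate (h : IsPathCost L a b x y c) {τ : ℝ}
    (hL : ∀ x s v, L (x + z) (s + τ) v = L x s v) :
    IsPathCost L (a + τ) (b + τ) (x + z) (y + z) c := by
  obtain ⟨η, η', hadm, rfl, rfl, hint, rfl⟩ := h
  have hcost : ∀ s, L (η (s - τ) + z) s (η' (s - τ)) = L (η (s - τ)) (s - τ) (η' (s - τ)) :=
    fun s => by rw [← hL (η (s - τ)) (s - τ), sub_add_cancel]
  refine ⟨_, _, hadm.translate τ z, by simp, by simp, ?_, ?_⟩
  · simpa only [hcost] using hint.comp_sub_right τ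
  · simp only [hcost]
    rw [integral_comp_sub_right (fun s => L (η s) s (η' s)), add_sub_cancel_right,
      add_sub_cancel_right]

theorem IsLagrangian.apply_add_intCast (hL : IsLagrangian n α β K m L) (w : Fin n → ℤ) (j : ℤ)
    (x : ℝⁿ) (s : ℝ) (v : ℝⁿ) : L (x + WithLp.toLp 2 (fun i => (w i : ℝ))) (s + j) v = L x s v :=
  hL.periodic x v s w j

theorem IsLagrangian.neg_le (hL : IsLagrangian n α β K m L) (hα : 0 ≤ α) (x : ℝⁿ) (s : ℝ)
    (v : ℝⁿ) : -K ≤ L x s v := by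
  have : 0 ≤ α * ‖v‖ ^ m := by positivity
  linarith [hL.lower_bound x s v]

theorem IsLagrangian.norm_le (hL : IsLagrangian n α β K m L) (hα : 0 < α) (hm : 1 ≤ m)
    (x : ℝⁿ) (s : ℝ) (v : ℝⁿ) : ‖v‖ ≤ (L x s v + K) / α + 1 := by
  have hv : ‖v‖ ≤ ‖v‖ ^ m + 1 := by
    rcases le_total ‖v‖ 1 with h | h
    · linarith [Real.rpow_nonneg (norm_nonneg v) m]
    · linarith [Real.self_le_rpow_of_one_le h hm]
  have : ‖v‖ ^ m ≤ (L x s v + K) / α := by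
    rw [le_div_iff₀ hα]
    linarith [hL.lower_bound x s v]
  linarith

theorem IsLagrangian.neg_mul_le_integral (hL : IsLagrangian n α β K m L) (hα : 0 ≤ α)
    (hab : a ≤ b) (hint : IntervalIntegrable (fun s => L (η s) s (η' s)) volume a b) :
    -(K * (b - a)) ≤ ∫ s in a..b, L (η s) s (η' s) := by
  have := integral_mono_on hab intervalIntegrable_const hint
    fun s _ => hL.neg_le hα (η s) s (η' s)
  rw [intervalIntegral.integral_const, smul_eq_mul] at this
  linarith

theorem IsPathCost.neg_mul_le (h : IsPathCost L a b x y c) (hL : IsLagrangian n α β K m L)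
    (hα : 0 ≤ α) (hab : a ≤ b) : -(K * (b - a)) ≤ c := by
  obtain ⟨η, η', -, -, -, hint, rfl⟩ := h
  exact hL.neg_mul_le_integral hα hab hint

theorem IsLagrangian.norm_sub_le_integral (hL : IsLagrangian n α β K m L) (hα : 0 < α)
    (hm : 1 ≤ m) (h : AdmissibleOn n a b η η') (hab : a ≤ b)
    (hint : IntervalIntegrable (fun s => L (η s) s (η' s)) volume a b) :
    ‖η b - η a‖ ≤ (∫ s in a..b, (L (η s) s (η' s) + K)) / α + (b - a) := by
  have hint' : IntervalIntegrable (fun s => L (η s) s (η' s) + K) volume a b :=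
    hint.add intervalIntegrable_const
  calc ‖η b - η a‖ ≤ ∫ s in a..b, ‖η' s‖ := h.norm_sub_le hab
    _ ≤ ∫ s in a..b, ((L (η s) s (η' s) + K) / α + 1) :=
      integral_mono_on hab h.1.norm ((hint'.div_const α).add intervalIntegrable_const)
        fun s _ => hL.norm_le hα hm _ _ _
    _ = _ := by
      rw [integral_add (hint'.div_const α) intervalIntegrable_const, intervalIntegral.integral_div,
        intervalIntegral.integral_const, smul_eq_mul, mul_one]

theorem IsLagrangian.exists_isPathCost_le (hL : IsLagrangian n α β K m L) (hab : a < b)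
    (x y : ℝⁿ) :
    ∃ c, IsPathCost L a b x y c ∧ c ≤ (b - a) * (β * ‖(b - a)⁻¹ • (y - x)‖ ^ m + K) := by
  set v := (b - a)⁻¹ • (y - x)
  let η : ℝ → ℝⁿ := fun s => x + (s - a) • v
  have hcont : Continuous fun s => L (η s) s v :=
    hL.cont.comp (f := fun s => (η s, s, v)) (by fun_prop)
  have hint := hcont.intervalIntegrable (μ := volume) a b
  refine ⟨_, ⟨η, fun _ => v, ⟨intervalIntegrable_const, fun s _ => ?_⟩, ?_, ?_, hint, rfl⟩, ?_⟩
  · simp [η, intervalIntegral.integral_const]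
  · simp [η]
  · simp [η, v, smul_smul, (sub_pos.2 hab).ne']
  · have := integral_mono_on hab.le hint intervalIntegrable_const
      fun s _ => hL.upper_bound (η s) s v
    rwa [intervalIntegral.integral_const, smul_eq_mul] at this

theorem IsLagrangian.exists_isPathCost_le_of_norm_le (hL : IsLagrangian n α β K m L)
    (hβ : 0 ≤ β) (hm : 0 ≤ m) (hab : a < b) (hxy : ‖y - x‖ ≤ V * (b - a)) :
    ∃ c, IsPathCost L a b x y c ∧ c ≤ (b - a) * (β * V ^ m + K) := by
  obtain ⟨c, hc, hcle⟩ := hL.exists_isPathCost_le hab x y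
  have hv : ‖(b - a)⁻¹ • (y - x)‖ ≤ V := by
    rw [norm_smul, norm_inv, Real.norm_of_nonneg (sub_pos.2 hab).le,
      inv_mul_le_iff₀ (sub_pos.2 hab), mul_comm]
    exact hxy
  refine ⟨c, hc, hcle.trans ?_⟩
  gcongr

theorem IsLagrangian.exists_isPathCost_le_two_mul (hL : IsLagrangian n α β K m L)
    (hβ : 0 ≤ β) (hK : 0 ≤ K) (hm : 0 ≤ m) (hab : 1 ≤ b - a) (hba : b - a ≤ 2)
    (hxy : ‖y - x‖ ≤ D) : ∃ c, IsPathCost L a b x y c ∧ c ≤ 2 * (β * D ^ m + K) := by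
  have hD : 0 ≤ D := (norm_nonneg _).trans hxy
  obtain ⟨c, hc, hcle⟩ := hL.exists_isPathCost_le_of_norm_le hβ hm (by linarith)
    (hxy.trans (le_mul_of_one_le_right hD hab))
  exact ⟨c, hc, hcle.trans (by gcongr)⟩

theorem IsLagrangian.bddBelow_isPathCost (hL : IsLagrangian n α β K m L) (hα : 0 ≤ α)
    (ht : 0 ≤ t) (x y : ℝⁿ) : BddBelow {c | IsPathCost L 0 t x y c} :=
  ⟨-(K * t), fun c (hc : IsPathCost L 0 t x y c) => by simpa using hc.neg_mul_le hL hα ht⟩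

theorem IsLagrangian.mCost_le (hL : IsLagrangian n α β K m L) (hα : 0 ≤ α) (ht : 0 ≤ t)
    (h : IsPathCost L 0 t x y c) : mCost n L t x y ≤ c :=
  csInf_le (hL.bddBelow_isPathCost hα ht x y) h

theorem IsLagrangian.nonempty_isPathCost (hL : IsLagrangian n α β K m L) (ht : 0 < t)
    (x y : ℝⁿ) : {c | IsPathCost L 0 t x y c}.Nonempty :=
  let ⟨c, hc, _⟩ := hL.exists_isPathCost_le ht x y
  ⟨c, hc⟩

theorem IsLagrangian.neg_mul_le_mCost (hL : IsLagrangian n α β K m L) (hα : 0 ≤ α)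
    (ht : 0 < t) (x y : ℝⁿ) : -(K * t) ≤ mCost n L t x y :=
  le_csInf (hL.nonempty_isPathCost ht x y) fun c (hc : IsPathCost L 0 t x y c) => by
    simpa using hc.neg_mul_le hL hα ht.le

theorem IsLagrangian.exists_isPathCost_lt_mCost_add_one (hL : IsLagrangian n α β K m L)
    (hα : 0 ≤ α) (ht : 0 < t) (x y : ℝⁿ) :
    ∃ c, IsPathCost L 0 t x y c ∧ c < mCost n L t x y + 1 :=
  (csInf_lt_iff (hL.bddBelow_isPathCost hα ht.le x y) (hL.nonempty_isPathCost ht x y)).1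
    (lt_add_one _)

theorem IsLagrangian.mCost_le_of_norm_le (hL : IsLagrangian n α β K m L) (hα : 0 ≤ α)
    (hβ : 0 ≤ β) (hm : 0 ≤ m) (ht : 0 < t) (hxy : ‖y - x‖ ≤ V * t) :
    mCost n L t x y ≤ t * (β * V ^ m + K) := by
  obtain ⟨c, hc, hcle⟩ := hL.exists_isPathCost_le_of_norm_le hβ hm ht (by simpa using hxy)
  simpa using (hL.mCost_le hα ht.le hc).trans hcle

theorem IsLagrangian.exists_isPathCost_two_mul_le (hL : IsLagrangian n α β K m L) (hβ : 0 ≤ β)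
    (hK : 0 ≤ K) (hm : 0 ≤ m) {τ A R : ℝ} {p q : ℝⁿ} (hτ : 0 ≤ τ) (hτt : τ + 4 ≤ t)
    (hA : IsPathCost L 0 t 0 y A) (h₁ : IsPathCost L 0 τ 0 p c₁)
    (h₂ : IsPathCost L (τ + 4) t q y c₂) (hpq : ‖q - p‖ ≤ R) :
    ∃ c, IsPathCost L 0 (2 * t) 0 ((2 : ℝ) • y) c ∧
      c ≤ A + c₁ + c₂ + 4 * (β * √n ^ m + K) + 2 * (β * R ^ m + K) := by
  obtain ⟨w, hw⟩ := EuclideanSpace.exists_norm_sub_intCast_le y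
  rw [Fintype.card_fin] at hw
  set z : ℝⁿ := WithLp.toLp 2 (fun i => (w i : ℝ))
  have hT := Int.floor_le t
  have hT' := Int.lt_floor_add_one t
  obtain ⟨s₁, hs₁, hs₁le⟩ := hL.exists_isPathCost_le_two_mul (a := t) (b := ⌊t⌋ + 2) hβ hK hm
    (by linarith) (by linarith) (by rwa [norm_sub_rev] : ‖z - y‖ ≤ √n)
  have h₁' : IsPathCost L (⌊t⌋ + 2) (τ + (⌊t⌋ + 2)) z (p + z) c₁ := by
    simpa using h₁.translate (hL.apply_add_intCast w (⌊t⌋ + 2))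
  obtain ⟨s₂, hs₂, hs₂le⟩ := hL.exists_isPathCost_le_two_mul (a := τ + (⌊t⌋ + 2))
    (b := τ + 4 + (⌊t⌋ - 1)) hβ hK hm (by linarith) (by linarith)
    (by rwa [add_sub_add_right_eq_sub] : ‖(q + z) - (p + z)‖ ≤ R)
  have h₂' : IsPathCost L (τ + 4 + (⌊t⌋ - 1)) (t + (⌊t⌋ - 1)) (q + z) (y + z) c₂ := by
    simpa using h₂.translate (hL.apply_add_intCast w (⌊t⌋ - 1))
  have hyz : (2 : ℝ) • y - (y + z) = y - z := by rw [two_smul]; abel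
  obtain ⟨s₃, hs₃, hs₃le⟩ := hL.exists_isPathCost_le_two_mul (a := t + (⌊t⌋ - 1)) (b := 2 * t)
    hβ hK hm (by linarith) (by linarith) (by rwa [hyz] : ‖(2 : ℝ) • y - (y + z)‖ ≤ √n)
  refine ⟨_, ((((hA.trans hs₁ ?_ ?_).trans h₁' ?_ ?_).trans hs₂ ?_ ?_).trans h₂' ?_ ?_).trans
    hs₃ ?_ ?_, by linarith⟩
  all_goals linarith

theorem IsLagrangian.mCost_two_mul_le (hL : IsLagrangian n α β K m L) (hα : 0 < α)
    (hβ : 0 ≤ β) (hK : 0 ≤ K) (hm : 1 ≤ m) {A P : ℝ} (ht : 4 ≤ t)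
    (hA : IsPathCost L 0 t 0 y A) (hAP : A + K * t ≤ P * t) :
    mCost n L (2 * t) 0 ((2 : ℝ) • y) ≤
      2 * A + 4 * K + 4 * (β * √n ^ m + K) + 2 * (β * (8 * P / α + 4) ^ m + K) := by
  obtain ⟨η, η', hadm, hη0, hηt, hint, rfl⟩ := hA
  set f := fun s => L (η s) s (η' s)
  have hintK : IntervalIntegrable (fun s => f s + K) volume 0 t :=
    hint.add intervalIntegrable_const
  obtain ⟨τ, hτ, hτt, hwin⟩ := exists_integral_window_le (ℓ := 4) (by norm_num) ht
    (fun s _ => by linarith [hL.neg_le hα.le (η s) s (η' s)]) hintK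
  have hcheap : ∫ s in τ..τ + 4, (f s + K) ≤ 8 * P := by
    rw [integral_add hint intervalIntegrable_const, intervalIntegral.integral_const, smul_eq_mul,
      sub_zero] at hwin
    calc _ ≤ 2 * 4 / t * ((∫ s in 0..t, f s) + t * K) := hwin
      _ ≤ 2 * 4 / t * (P * t) := by gcongr; linarith
      _ = 8 * P := by field_simp; ring
  have hpq : ‖η (τ + 4) - η τ‖ ≤ 8 * P / α + 4 := by
    refine (hL.norm_sub_le_integral hα hm (hadm.mono hτ (by linarith) hτt) (by linarith)
      (hint.mono_of_le hτ (by linarith) hτt)).trans ?_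
    rw [add_sub_cancel_left]
    gcongr
  have h₁ : IsPathCost L 0 τ 0 (η τ) (∫ s in 0..τ, f s) :=
    ⟨η, η', hadm.mono le_rfl hτ (by linarith), hη0, rfl, hint.mono_of_le le_rfl hτ (by linarith),
      rfl⟩
  have h₂ : IsPathCost L (τ + 4) t (η (τ + 4)) y (∫ s in τ + 4..t, f s) :=
    ⟨η, η', hadm.mono (by linarith) hτt le_rfl, rfl, hηt,
      hint.mono_of_le (by linarith) hτt le_rfl, rfl⟩
  obtain ⟨c, hc, hcle⟩ := hL.exists_isPathCost_two_mul_le hβ hK (by linarith) hτ hτt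
    ⟨η, η', hadm, hη0, hηt, hint, rfl⟩ h₁ h₂ hpq
  have hsplit : (∫ s in 0..τ, f s) + (∫ s in τ..τ + 4, f s) + (∫ s in τ + 4..t, f s)
      = ∫ s in 0..t, f s := by
    rw [integral_add_adjacent_intervals (hint.mono_of_le le_rfl hτ (by linarith))
        (hint.mono_of_le hτ (by linarith) hτt),
      integral_add_adjacent_intervals (hint.mono_of_le le_rfl (by linarith) hτt)
        (hint.mono_of_le (by linarith) hτt le_rfl)]
  have hmid := hL.neg_mul_le_integral hα.le (by linarith : τ ≤ τ + 4)
    (hint.mono_of_le hτ (by linarith) hτt)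
  calc mCost n L (2 * t) 0 ((2 : ℝ) • y) ≤ c := hL.mCost_le hα.le (by linarith) hc
    _ ≤ _ := by linarith

end

theorem mCost_subadditive_general (n : ℕ) (α β K m : ℝ)
    (hα : 0 < α) (hβ : 0 < β) (hK : 0 < K) (hm : 1 < m) (M : ℝ) (hM : 0 < M) :
    ∃ C > 0,
      ∀ L : EuclideanSpace ℝ (Fin n) → ℝ → EuclideanSpace ℝ (Fin n) → ℝ,
        IsLagrangian n α β K m L →
        ∀ t : ℝ, 0 < t → ∀ y : EuclideanSpace ℝ (Fin n), ‖y‖ ≤ M * t →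
          mCost n L (2 * t) 0 ((2 : ℝ) • y) ≤ 2 * mCost n L t 0 y + C := by
  have hm0 : 0 ≤ m := by linarith
  refine ⟨8 * (β * M ^ m + 2 * K) + 2 + 4 * K + 4 * (β * √n ^ m + K) +
    2 * (β * (8 * (β * M ^ m + 2 * K + 1) / α + 4) ^ m + K), by positivity, ?_⟩
  intro L hL t ht y hy
  have hup := hL.mCost_le_of_norm_le hα.le hβ.le hm0 ht (x := 0) (by rwa [sub_zero])
  have hlow := hL.neg_mul_le_mCost hα.le ht 0 y
  have hP : 0 ≤ β * M ^ m + 2 * K := by positivity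
  rcases le_or_gt t 4 with ht4 | ht4
  · have h2t := hL.mCost_le_of_norm_le hα.le hβ.le hm0 (by linarith : 0 < 2 * t)
      (x := 0) (y := (2 : ℝ) • y) (V := M) (by rw [sub_zero, norm_smul, Real.norm_two]; linarith)
    have hwindow : 0 ≤ β * (8 * (β * M ^ m + 2 * K + 1) / α + 4) ^ m := by positivity
    have hlattice : 0 ≤ β * √n ^ m := by positivity
    nlinarith [mul_le_mul_of_nonneg_left ht4 hP]
  · obtain ⟨A, hA, hAlt⟩ := hL.exists_isPathCost_lt_mCost_add_one hα.le ht 0 y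
    have hdouble := hL.mCost_two_mul_le hα hβ.le hK.le hm.le ht4.le hA
      (P := β * M ^ m + 2 * K + 1) (by nlinarith)
    linarith

/-- Approximate subadditivity (Lemma 2.2(ii)): for every `M > 0` there is a constant `C > 0`
depending only on `K, M, n, α, β, m` such that `m(2t, 0, 2y) ≤ 2 m(t, 0, y) + C` whenever
`t > 0` and `|y| ≤ M t`. -/
theorem mCost_subadditive (n : ℕ) (hn : 1 ≤ n) (α β K m : ℝ)
    (hα : 0 < α) (hβ : 0 < β) (hK : 0 < K) (hm : 1 < m) (M : ℝ) (hM : 0 < M) :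
    ∃ C > 0,
      ∀ L : EuclideanSpace ℝ (Fin n) → ℝ → EuclideanSpace ℝ (Fin n) → ℝ,
        IsLagrangian n α β K m L →
        ∀ t : ℝ, 0 < t → ∀ y : EuclideanSpace ℝ (Fin n), ‖y‖ ≤ M * t →
          mCost n L (2 * t) 0 ((2 : ℝ) • y) ≤ 2 * mCost n L t 0 y + C :=
  mCost_subadditive_general n α β K m hα hβ hK hm M hM

end
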